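/- arXiv:1008.1553 — 4 statements merged into one kernel-verified Lean document; each statement's English description precedes it below -/
import Mathlib

section
/- Let Ē₁ and Ē₂ be nonzero euclidean lattices with μ_max(Ē₁) ≤ 0 and μ_max(Ē₂) ≤ 0. Then every nonzero vector of E₁ ⊗ E₂ has norm ≥ 1 in (E₁ ⊗ E₂) ⊗ ℝ equipped with the tensor product inner product. -/
/-!
Write `x ∈ E₁ ⊗ E₂` as `∑ₖ uₖ ⊗ vₖ` with `(uₖ)` and `(vₖ)` both `ℤ`-linearly independent (a rank
factorization of the coefficient matrix of `x`, available because `ℤ` is a PID). Then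
`‖x‖² = tr (G₁ G₂)`, where `G₁`, `G₂` are the Gram matrices of the sublattices spanned by the `uₖ`
and by the `vₖ`. The slope hypotheses say `det G₁, det G₂ ≥ 1`, and for positive semidefinite
matrices `tr (G₁ G₂) ≥ 1` as soon as `det (G₁ G₂) ≥ 1`: the eigenvalues of `S G₂ Sᴴ`, where
`G₁ = Sᴴ S`, are nonnegative with product at least one, so their sum is at least one.
-/

noncomputable section

/-- The covolume of a euclidean lattice presented by the Gram matrix `B` of a `ℤ`-basis:
the square root of the Gram determinant. -/
def latVol {ι : Type} [Fintype ι] [DecidableEq ι] (B : Matrix ι ι ℝ) : ℝ :=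
  Real.sqrt B.det

/-- The arithmetic degree of a euclidean lattice: `- log` of its covolume. -/
def latDeg {ι : Type} [Fintype ι] [DecidableEq ι] (B : Matrix ι ι ℝ) : ℝ :=
  - Real.log (latVol B)

/-- The slope of a euclidean lattice: degree divided by rank. -/
def latMu {ι : Type} [Fintype ι] [DecidableEq ι] (B : Matrix ι ι ℝ) : ℝ :=
  latDeg B / (Fintype.card ι)

/-- The Gram matrix (for the induced inner product) of the rank-`s` sublattice whose
`ℤ`-basis consists of the columns of the integer matrix `A`, inside the lattice with
Gram matrix `B`. -/
def inducedGram {ι : Type} [Fintype ι] (B : Matrix ι ι ℝ) {s : ℕ}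
    (A : Matrix ι (Fin s) ℤ) : Matrix (Fin s) (Fin s) ℝ :=
  (A.map (Int.cast : ℤ → ℝ)).transpose * B * A.map (Int.cast : ℤ → ℝ)

/-- The maximal slope `μ_max` of a euclidean lattice: the supremum of the slopes of its
nonzero sublattices (of any rank), each equipped with the induced inner product.  A nonzero
sublattice is presented by a `ℤ`-basis, i.e. by the columns of an integer matrix `A` which
are linearly independent over `ℤ`. -/
def latMuMax {ι : Type} [Fintype ι] [DecidableEq ι] (B : Matrix ι ι ℝ) : ℝ :=
  sSup { m : ℝ | ∃ (s : ℕ) (A : Matrix ι (Fin s) ℤ), 0 < s ∧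
    LinearIndependent ℤ (fun k : Fin s => fun i : ι => A i k) ∧
    m = latMu (inducedGram B A) }

end

open Matrix
open scoped Kronecker

lemma Finset.one_le_sum_of_one_le_prod {ι : Type*} {s : Finset ι} (hs : s.Nonempty) {f : ι → ℝ}
    (hf : ∀ i ∈ s, 0 ≤ f i) (h : 1 ≤ ∏ i ∈ s, f i) : 1 ≤ ∑ i ∈ s, f i := by
  have hle : ∏ i ∈ s, f i ≤ (∑ i ∈ s, f i) ^ s.card := by
    rw [← Finset.prod_const]
    exact Finset.prod_le_prod hf fun i hi => Finset.single_le_sum hf hi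
  exact (one_le_pow_iff_of_nonneg (Finset.sum_nonneg hf) hs.card_pos.ne').mp (h.trans hle)

section Trace

variable {n : Type*} [Fintype n] [DecidableEq n] [Nonempty n]

lemma Matrix.PosSemidef.one_le_trace_of_one_le_det {A : Matrix n n ℝ} (hA : A.PosSemidef)
    (hdet : 1 ≤ A.det) : 1 ≤ A.trace := by
  rw [hA.isHermitian.trace_eq_sum_eigenvalues]
  rw [hA.isHermitian.det_eq_prod_eigenvalues] at hdet
  exact Finset.one_le_sum_of_one_le_prod Finset.univ_nonempty
    (fun i _ => hA.eigenvalues_nonneg i) (by simpa using hdet)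

open scoped MatrixOrder in
lemma Matrix.PosSemidef.one_le_trace_mul_of_one_le_det {A B : Matrix n n ℝ} (hA : A.PosSemidef)
    (hB : B.PosSemidef) (hdet : 1 ≤ (A * B).det) : 1 ≤ (A * B).trace := by
  obtain ⟨S, rfl⟩ := CStarAlgebra.nonneg_iff_eq_star_mul_self.mp hA.nonneg
  have htrace : (star S * S * B).trace = (S * B * star S).trace := by
    rw [Matrix.mul_assoc, trace_mul_comm]
  have hdet' : (S * B * star S).det = (star S * S * B).det := by
    simp only [det_mul]; ring
  rw [htrace]
  exact (hB.mul_mul_conjTranspose_same S).one_le_trace_of_one_le_det (hdet' ▸ hdet)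

end Trace

theorem Matrix.exists_eq_mul_transpose_linearIndependent
    {R m n : Type*} [CommRing R] [IsDomain R] [IsPrincipalIdealRing R] [Fintype m] [Fintype n]
    (X : Matrix m n R) :
    ∃ (s : ℕ) (U : Matrix m (Fin s) R) (V : Matrix n (Fin s) R),
      LinearIndependent R U.col ∧ LinearIndependent R V.col ∧ X = U * Vᵀ := by
  classical
  obtain ⟨s, b⟩ := Submodule.basisOfPid (Pi.basisFun R m) (LinearMap.range X.mulVecLin)
  let coord : (n → R) →ₗ[R] Fin s →₀ R := b.repr.toLinearMap ∘ₗ X.mulVecLin.rangeRestrict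
  have hcoord : Function.Surjective coord :=
    b.repr.surjective.comp X.mulVecLin.surjective_rangeRestrict
  refine ⟨s, of fun i k => (b k : m → R) i, of fun j k => coord (Pi.single j 1) k, ?_, ?_, ?_⟩
  · change LinearIndependent R fun k => (b k : m → R)
    exact b.linearIndependent.map' (LinearMap.range X.mulVecLin).subtype (Submodule.ker_subtype _)
  · rw [Fintype.linearIndependent_iff]
    intro c hc k
    -- `∑ₖ cₖ coordₖ` vanishes on the standard basis, hence everywhere; evaluate it at a preimage
    -- of `single k 1` under the surjection `coord`.
    have hφ : Finsupp.linearCombination R c ∘ₗ coord = 0 := by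
      refine (Pi.basisFun R n).ext fun j => ?_
      simpa [Finsupp.linearCombination_apply, Finsupp.sum_fintype, mul_comm] using congrFun hc j
    obtain ⟨y, hy⟩ := hcoord (Finsupp.single k 1)
    simpa [hy] using LinearMap.congr_fun hφ y
  · ext i j
    have h := congrFun (congrArg Subtype.val
      (b.sum_repr (X.mulVecLin.rangeRestrict (Pi.single j 1)))) i
    simp only [Submodule.coe_sum, Submodule.coe_smul, Finset.sum_apply, Pi.smul_apply,
      smul_eq_mul, LinearMap.codRestrict_apply, mulVecLin_apply, mulVec_single_one] at h
    rw [mul_apply, ← col_apply X, ← h]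
    simp only [of_apply, transpose_apply, coord, LinearMap.comp_apply, mul_comm]
    rfl

theorem Matrix.vec_mul_transpose_dotProduct_kronecker_mulVec {R l m n : Type*} [CommRing R]
    [Fintype l] [Fintype m] [Fintype n]
    (A : Matrix m m R) (B : Matrix n n R) (U : Matrix m l R) (V : Matrix n l R) :
    vec (V * Uᵀ) ⬝ᵥ (A ⊗ₖ B) *ᵥ vec (V * Uᵀ) = ((Uᵀ * Aᵀ * U) * (Vᵀ * B * V)).trace := by
  calc _ = (U * (Vᵀ * B * V * Uᵀ * Aᵀ)).trace := by
        rw [kronecker_mulVec_vec, vec_dotProduct_vec]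
        simp only [transpose_mul, transpose_transpose, Matrix.mul_assoc]
    _ = (Vᵀ * B * V * Uᵀ * Aᵀ * U).trace := trace_mul_comm _ _
    _ = (Vᵀ * B * V * (Uᵀ * Aᵀ * U)).trace := by simp only [Matrix.mul_assoc]
    _ = _ := trace_mul_comm _ _

lemma Matrix.PosSemidef.inducedGram {ι : Type} [Fintype ι] {B : Matrix ι ι ℝ} (hB : B.PosSemidef)
    {s : ℕ} (A : Matrix ι (Fin s) ℤ) : (inducedGram B A).PosSemidef := by
  have h := hB.conjTranspose_mul_mul_same (A.map (Int.cast : ℤ → ℝ))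
  rwa [conjTranspose_eq_transpose_of_trivial] at h

open Matrix in
/-- The lattices are presented by the Gram matrices `B₁`, `B₂` of `ℤ`-bases, `μ_max(Ēᵢ) ≤ 0` by
the equivalent condition that every nonzero sublattice has covolume `≥ 1`, and `x` by its integer
coordinates in the tensor product basis, whose Gram matrix is the Kronecker product `B₁ ⊗ₖ B₂`. -/
theorem tensor_norm_ge_one_general (r₁ r₂ : ℕ)
    (B₁ : Matrix (Fin r₁) (Fin r₁) ℝ) (B₂ : Matrix (Fin r₂) (Fin r₂) ℝ)
    (hB₁ : B₁.PosDef) (hB₂ : B₂.PosDef)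
    (hmax₁ : ∀ (s : ℕ) (A : Matrix (Fin r₁) (Fin s) ℤ), 0 < s →
      LinearIndependent ℤ (fun k : Fin s => fun i => A i k) → 1 ≤ latVol (inducedGram B₁ A))
    (hmax₂ : ∀ (s : ℕ) (A : Matrix (Fin r₂) (Fin s) ℤ), 0 < s →
      LinearIndependent ℤ (fun k : Fin s => fun i => A i k) → 1 ≤ latVol (inducedGram B₂ A)) :
    ∀ x : Fin r₁ × Fin r₂ → ℤ, x ≠ 0 →
      1 ≤ Real.sqrt ((fun p => (x p : ℝ)) ⬝ᵥ
            (Matrix.kroneckerMap (· * ·) B₁ B₂).mulVec (fun p => (x p : ℝ))) := by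
  intro x hx
  obtain ⟨s, V, U, hV, hU, hx_eq⟩ :=
    exists_eq_mul_transpose_linearIndependent (of fun j i => x (i, j))
  have hs : 0 < s := by
    refine Nat.pos_of_ne_zero fun hs => hx ?_
    subst hs
    ext ⟨i, j⟩
    simpa using congrFun (congrFun hx_eq j) i
  have : Nonempty (Fin s) := ⟨⟨0, hs⟩⟩
  have hvec : (fun p => (x p : ℝ)) =
      vec (V.map (Int.cast : ℤ → ℝ) * (U.map (Int.cast : ℤ → ℝ))ᵀ) := by
    ext ⟨i, j⟩
    simpa [mul_apply] using congr_arg (Int.cast : ℤ → ℝ) (congrFun (congrFun hx_eq j) i)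
  have hB₁_symm : B₁ᵀ = B₁ := (conjTranspose_eq_transpose_of_trivial B₁).symm.trans hB₁.isHermitian
  rw [hvec, vec_mul_transpose_dotProduct_kronecker_mulVec, hB₁_symm, Real.one_le_sqrt]
  refine (hB₁.posSemidef.inducedGram U).one_le_trace_mul_of_one_le_det
    (hB₂.posSemidef.inducedGram V) ?_
  rw [det_mul]
  exact one_le_mul_of_one_le_of_one_le (Real.one_le_sqrt.mp (hmax₁ s U hs hU))
    (Real.one_le_sqrt.mp (hmax₂ s V hs hV))

open Matrix in
/-- Let `Ē₁`, `Ē₂` be nonzero euclidean lattices (presented by positive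
definite Gram matrices `B₁`, `B₂`) with `μ_max(Ē₁) ≤ 0` and `μ_max(Ē₂) ≤ 0`
(equivalently: every nonzero sublattice, with the induced inner product, has covolume `≥ 1`).
Then every nonzero vector `x` of `E₁ ⊗ E₂` (an integer vector in the tensor product basis)
has norm `≥ 1` for the tensor product inner product, whose Gram matrix is the Kronecker
product of `B₁` and `B₂`. -/
theorem tensor_norm_ge_one (r₁ r₂ : ℕ) (h₁ : 0 < r₁) (h₂ : 0 < r₂)
    (B₁ : Matrix (Fin r₁) (Fin r₁) ℝ) (B₂ : Matrix (Fin r₂) (Fin r₂) ℝ)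
    (hB₁ : B₁.PosDef) (hB₂ : B₂.PosDef)
    (hmax₁ : ∀ (s : ℕ) (A : Matrix (Fin r₁) (Fin s) ℤ), 0 < s →
      LinearIndependent ℤ (fun k : Fin s => fun i => A i k) → 1 ≤ latVol (inducedGram B₁ A))
    (hmax₂ : ∀ (s : ℕ) (A : Matrix (Fin r₂) (Fin s) ℤ), 0 < s →
      LinearIndependent ℤ (fun k : Fin s => fun i => A i k) → 1 ≤ latVol (inducedGram B₂ A)) :
    ∀ x : Fin r₁ × Fin r₂ → ℤ, x ≠ 0 →
      1 ≤ Real.sqrt ((fun p => (x p : ℝ)) ⬝ᵥ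
            (Matrix.kroneckerMap (· * ·) B₁ B₂).mulVec (fun p => (x p : ℝ))) :=
  tensor_norm_ge_one_general r₁ r₂ B₁ B₂ hB₁ hB₂ hmax₁ hmax₂
end

section
/- Let K be a number field. The orthogonal direct sum Ē₁ ⊥ Ē₂ of two nef hermitian 𝒪_K-lattices is nef. -/
open scoped NumberField ComplexOrder Classical

noncomputable section

/-- The hermitian pairing on complex coordinate vectors determined by the (Gram) matrix `M`:
`⟨u, v⟩ = ∑ conj(uᵢ) · Mᵢⱼ · vⱼ` (antilinear in the first variable). -/
def cForm {ι : Type} [Fintype ι] (M : Matrix ι ι ℂ) (u v : ι → ℂ) : ℂ :=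
  ∑ i, ∑ j, (starRingEnd ℂ) (u i) * M i j * v j

/-- The hermitian pairing, at the complex embedding `σ` of `K`, of two `K`-rational
coordinate vectors, for the metric with Gram matrix `M` at `σ`. -/
def eForm {K : Type} [Field K] {ι : Type} [Fintype ι] (M : Matrix ι ι ℂ)
    (σ : K →+* ℂ) (u v : ι → K) : ℂ :=
  cForm M (fun i => σ (u i)) (fun i => σ (v i))

/-- The arithmetic degree of a (finitely generated) `𝒪_K`-submodule `F` of `K^ι`, for the
hermitian metrics on `K^ι` whose Gram matrix at the complex embedding `σ` is `H σ`, with the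
induced metrics on `F`.  It is computed from a `K`-linearly independent family `x` of elements
of `F` spanning the same `K`-subspace as `F`:
`deg F = log #(F / (𝒪_K x₁ + ⋯ + 𝒪_K x_s)) - ∑_σ log ‖x₁ ∧ ⋯ ∧ x_s‖_σ`,
where `‖x₁ ∧ ⋯ ∧ x_s‖_σ` is the square root of the Gram determinant of `x` at `σ`.
(For `F` of rank one this is the usual `deg F = log #(F/𝒪_K ℓ) - ∑_v ε_v log ‖ℓ‖_v`, the sum
running over all complex embeddings; the general case agrees with `deg F = deg (det F)`,
where `det F = Λ^s F` carries the Gram-determinant metrics.) -/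
def hDeg (K : Type) [Field K] [NumberField K] {ι : Type} [Fintype ι]
    (H : (K →+* ℂ) → Matrix ι ι ℂ) (F : Submodule (𝓞 K) (ι → K)) : ℝ :=
  if h : ∃ p : (s : ℕ) × (Fin s → ι → K), 0 < p.1 ∧ (∀ a, p.2 a ∈ F) ∧
      LinearIndependent K p.2 ∧ ∀ y ∈ F, y ∈ Submodule.span K (Set.range p.2) then
    Real.log (Nat.card
        (↥F ⧸ Submodule.comap F.subtype (Submodule.span (𝓞 K) (Set.range h.choose.2))))
      - ∑ᶠ σ : K →+* ℂ, Real.log (Real.sqrt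
          ((Matrix.of fun a b => eForm (H σ) σ (h.choose.2 a) (h.choose.2 b)).det.re))
  else 0

/-- The rank of an `𝒪_K`-submodule `F` of `K^ι`: the dimension of the `K`-subspace
it spans. -/
def hRank (K : Type) [Field K] [NumberField K] {ι : Type} [Fintype ι]
    (F : Submodule (𝓞 K) (ι → K)) : ℕ :=
  Module.finrank K ↥(Submodule.span K (F : Set (ι → K)))

/-- The slope of a nonzero `𝒪_K`-submodule of `K^ι` with the induced metrics:
degree divided by rank. -/
def hMu (K : Type) [Field K] [NumberField K] {ι : Type} [Fintype ι]
    (H : (K →+* ℂ) → Matrix ι ι ℂ) (F : Submodule (𝓞 K) (ι → K)) : ℝ :=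
  hDeg K H F / hRank K F

/-- The maximal slope `μ_max` of the hermitian `𝒪_K`-lattice `E ⊆ K^ι`: the supremum of the
slopes of its nonzero `𝒪_K`-submodules (of any rank), with the induced metrics. -/
def hMuMax (K : Type) [Field K] [NumberField K] {ι : Type} [Fintype ι]
    (H : (K →+* ℂ) → Matrix ι ι ℂ) (E : Submodule (𝓞 K) (ι → K)) : ℝ :=
  sSup { m : ℝ | ∃ F : Submodule (𝓞 K) (ι → K), F ≠ ⊥ ∧ F ≤ E ∧ m = hMu K H F }

/-- The compatibility of the family of Gram matrices `H` with complex conjugation: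
the metric at the conjugate embedding is the conjugate metric (so that the data of `H`
amounts to a euclidean/hermitian metric at each archimedean place of `K`). -/
def ConjCompatible (K : Type) [Field K] {ι : Type} [Fintype ι]
    (H : (K →+* ℂ) → Matrix ι ι ℂ) : Prop :=
  ∀ σ : K →+* ℂ, H ((starRingEnd ℂ).comp σ) = (H σ).map (starRingEnd ℂ)

/-- The arithmetic degree of a nonzero rank-one hermitian `𝒪_K'`-lattice, presented as a
nonzero finitely generated `𝒪_{K'}`-submodule `L` of `K'` whose metric at the complex
embedding `σ` is `‖y‖_σ² = g σ · |σ(y)|²`: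
`deg L = log #(L/𝒪_{K'} ℓ) - ∑_σ log ‖ℓ‖_σ` for a nonzero `ℓ ∈ L`. -/
def degLine (K' : Type) [Field K'] [NumberField K']
    (L : Submodule (𝓞 K') K') (g : (K' →+* ℂ) → ℝ) : ℝ :=
  if h : ∃ x : K', x ∈ L ∧ x ≠ 0 then
    Real.log (Nat.card
        (↥L ⧸ Submodule.comap L.subtype (Submodule.span (𝓞 K') {h.choose})))
      - ∑ᶠ σ : K' →+* ℂ, Real.log (Real.sqrt (g σ * Complex.normSq (σ h.choose)))
  else 0

/-- The quotient metric induced at the embedding `σ` on a rank-one quotient of the hermitian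
lattice `(K'^ι, H')` via the `K'`-linear surjection `ψ : K'^ι → K'`:
`‖1‖² = inf { ⟨e, e⟩_{H' σ} | ψ_σ(e) = 1 }` (infimum over the fibre of `1` in `ℂ^ι`). -/
def quotMetric {K' : Type} [Field K'] {ι : Type} [Fintype ι] [DecidableEq ι]
    (H' : (K' →+* ℂ) → Matrix ι ι ℂ) (ψ : (ι → K') →ₗ[K'] K') (σ : K' →+* ℂ) : ℝ :=
  sInf { t : ℝ | ∃ e : ι → ℂ, (∑ i, σ (ψ (Pi.single i 1)) * e i) = 1 ∧
    t = (cForm (H' σ) e e).re }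

/-- Base change of an `𝒪_K`-lattice `E ⊆ K^ι` to the ring of integers of a finite
extension `K'` of `K`: the `𝒪_{K'}`-span of the image of `E` in `K'^ι`. -/
def baseChange (K K' : Type) [Field K] [NumberField K] [Field K'] [NumberField K']
    [Algebra K K'] {ι : Type} [Fintype ι] (E : Submodule (𝓞 K) (ι → K)) :
    Submodule (𝓞 K') (ι → K') :=
  Submodule.span (𝓞 K') ((fun v i => algebraMap K K' (v i)) '' (E : Set (ι → K)))

/-- The metrics on the base change to `K'` of a hermitian lattice over `K` with metrics `H`:
the Gram matrix at an embedding `σ'` of `K'` is the Gram matrix of `H` at the induced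
embedding of `K`. -/
def baseChangeMetric (K K' : Type) [Field K] [Field K'] [Algebra K K'] {ι : Type}
    (H : (K →+* ℂ) → Matrix ι ι ℂ) : (K' →+* ℂ) → Matrix ι ι ℂ :=
  fun σ' => H (σ'.comp (algebraMap K K'))

/-- A hermitian `𝒪_K`-lattice `E ⊆ K^ι` (with metrics `H`) is nef if for every finite
extension `K'/K`, every rank-one quotient of `E ⊗_{𝒪_K} 𝒪_{K'}`, with the quotient metrics,
has nonnegative arithmetic degree.  A rank-one quotient is the image of `E ⊗ 𝒪_{K'}` under a
`K'`-linear form `ψ` on `K'^ι` (every rank-one quotient of the full lattice `E ⊗ 𝒪_{K'}`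
arises this way, with the quotient metrics given by `quotMetric`). -/
def IsNef (K : Type) [Field K] [NumberField K] {ι : Type} [Fintype ι] [DecidableEq ι]
    (H : (K →+* ℂ) → Matrix ι ι ℂ) (E : Submodule (𝓞 K) (ι → K)) : Prop :=
  ∀ (K' : Type) [Field K'] [NumberField K'] [Algebra K K'],
    ∀ ψ : (ι → K') →ₗ[K'] K',
      Submodule.map (ψ.restrictScalars (𝓞 K')) (baseChange K K' E) ≠ ⊥ →
      0 ≤ degLine K' (Submodule.map (ψ.restrictScalars (𝓞 K')) (baseChange K K' E))
            (quotMetric (baseChangeMetric K K' H) ψ)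

end

/-
A rank-one quotient `L` of `(E₁ ⊥ E₂) ⊗ 𝒪_{K'}` is cut out by a linear form `ψ` on `K'^(ι₁ ⊕ ι₂)`,
and it is the sum `L₁ + L₂` of the rank-one quotients of `E₁ ⊗ 𝒪_{K'}` and `E₂ ⊗ 𝒪_{K'}` cut out
by the restrictions `ψ₁`, `ψ₂` of `ψ`. Some `Lᵢ`, say `L₁`, is nonzero, and `L₁ ⊆ L`. Computing
both degrees from the same nonzero `ℓ ∈ L₁` (the degree does not depend on `ℓ`, by the product
formula) gives `deg L ≥ deg L₁ ≥ 0`: the index of `𝒪_{K'} ℓ` in `L` is at least its index in `L₁`,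
and at every embedding the quotient metric of `L` is at most that of `L₁`, because extending a
preimage of `1` under `ψ₁` by zero gives a preimage under `ψ` of the same length for the
orthogonal sum metric.
-/

section CyclicIndex

open Submodule

variable {R M : Type*} [Ring R] [AddCommGroup M] [Module R M]

theorem relIndex_span_smul_span {x : M} (hx : Function.Injective fun r : R => r • x) (c : R) :
    (span R {c • x}).toAddSubgroup.relIndex (span R {x}).toAddSubgroup =
      (Ideal.span {c}).toAddSubgroup.index := by
  set f := LinearMap.toSpanSingleton R M x
  have hspan : span R {x} = Submodule.map f ⊤ := by
    rw [Submodule.map_top, LinearMap.span_singleton_eq_range]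
  have hspan' : span R {c • x} = Submodule.map f (Ideal.span {c}) := by
    rw [Submodule.map_span, Set.image_singleton, LinearMap.toSpanSingleton_apply]
  rw [hspan, hspan', map_toAddSubgroup, map_toAddSubgroup,
    AddSubgroup.relIndex_map_map_of_injective _ _ hx, Submodule.top_toAddSubgroup,
    AddSubgroup.relIndex_top_right]

end CyclicIndex

section RankOneLattice

open Submodule

variable {K : Type*} [Field K] [NumberField K]

theorem relIndex_span_singleton_ne_zero {L : Submodule (𝓞 K) K} (hL : L.FG) {x : K}
    (hx0 : x ≠ 0) :
    (span (𝓞 K) {x}).toAddSubgroup.relIndex L.toAddSubgroup ≠ 0 := by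
  have : Module.Finite (𝓞 K) L := Module.Finite.iff_fg.mpr hL
  have : Module.Finite ℤ L := Module.Finite.trans (𝓞 K) L
  have htors : Module.IsTorsion ℤ (L ⧸ comap L.subtype (span (𝓞 K) {x})) := by
    intro q
    obtain ⟨y, rfl⟩ := Submodule.Quotient.mk_surjective _ q
    obtain ⟨n, hn, hint⟩ := IsAlgebraic.exists_integral_multiple
      ((IsFractionRing.isAlgebraic_iff ℤ ℚ K).mpr (Algebra.IsAlgebraic.isAlgebraic (y / x : K)))
    refine ⟨⟨n, mem_nonZeroDivisors_of_ne_zero hn⟩, ?_⟩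
    rw [← Submodule.Quotient.mk_smul, Submodule.Quotient.mk_eq_zero]
    refine mem_span_singleton.mpr ⟨⟨_, hint⟩, ?_⟩
    show (n • (y / x)) * x = n • (y : K)
    rw [smul_mul_assoc, div_mul_cancel₀ _ hx0]
  have := Module.finite_of_fg_torsion _ htors
  exact Nat.card_ne_zero.mpr ⟨inferInstance, this⟩

theorem relIndex_span_smul {L : Submodule (𝓞 K) K} {x : K} (hx : x ∈ L) (hx0 : x ≠ 0)
    (c : 𝓞 K) :
    (span (𝓞 K) {c • x}).toAddSubgroup.relIndex L.toAddSubgroup =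
      Ideal.absNorm (Ideal.span {c}) *
        (span (𝓞 K) {x}).toAddSubgroup.relIndex L.toAddSubgroup := by
  rw [Ideal.absNorm_eq_index, ← relIndex_span_smul_span (smul_left_injective _ hx0),
    AddSubgroup.relIndex_mul_relIndex]
  · exact span_le.mpr (Set.singleton_subset_iff.mpr (smul_mem _ c (mem_span_singleton_self x)))
  · exact span_le.mpr (Set.singleton_subset_iff.mpr hx)

theorem prod_norm_embeddings_eq_absNorm (c : 𝓞 K) :
    ∏ σ : K →+* ℂ, ‖σ c‖ = Ideal.absNorm (Ideal.span {c}) := by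
  rw [Ideal.absNorm_span_singleton, Nat.cast_natAbs, Int.cast_abs, ← Rat.cast_intCast,
    Algebra.coe_norm_int, ← Complex.norm_ratCast, ← eq_ratCast (algebraMap ℚ ℂ),
    Algebra.norm_eq_prod_embeddings, norm_prod]
  exact Fintype.prod_equiv (RingHom.equivRatAlgHom K ℂ) _ _ fun σ => rfl

noncomputable def degAt (L : Submodule (𝓞 K) K) (x : K) : ℝ :=
  Real.log ((span (𝓞 K) {x}).toAddSubgroup.relIndex L.toAddSubgroup) -
    ∑ σ : K →+* ℂ, Real.log ‖σ x‖

theorem sum_log_norm_embeddings_mul {x y : K} (hx : x ≠ 0) (hy : y ≠ 0) :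
    ∑ σ : K →+* ℂ, Real.log ‖σ (x * y)‖ =
      ∑ σ : K →+* ℂ, Real.log ‖σ x‖ + ∑ σ : K →+* ℂ, Real.log ‖σ y‖ := by
  rw [← Finset.sum_add_distrib]
  refine Finset.sum_congr rfl fun σ _ => ?_
  rw [map_mul, norm_mul, Real.log_mul] <;> simpa

theorem degAt_smul {L : Submodule (𝓞 K) K} (hL : L.FG) {x : K} (hx : x ∈ L) (hx0 : x ≠ 0)
    {c : 𝓞 K} (hc : c ≠ 0) : degAt L (c • x) = degAt L x := by
  have hcK : (c : K) ≠ 0 := by simpa using hc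
  have hnorm : (Ideal.absNorm (Ideal.span {c}) : ℝ) ≠ 0 := by
    simpa [Ideal.absNorm_span_singleton] using hc
  have hindex : ((span (𝓞 K) {x}).toAddSubgroup.relIndex L.toAddSubgroup : ℝ) ≠ 0 := by
    exact_mod_cast relIndex_span_singleton_ne_zero hL hx0
  rw [degAt, degAt, relIndex_span_smul hx hx0, Nat.cast_mul, Real.log_mul hnorm hindex,
    Algebra.smul_def, sum_log_norm_embeddings_mul hcK hx0, ← prod_norm_embeddings_eq_absNorm,
    Real.log_prod fun σ _ => by simpa using hcK]
  ring

theorem degAt_eq_degAt {L : Submodule (𝓞 K) K} (hL : L.FG) {x y : K} (hx : x ∈ L)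
    (hx0 : x ≠ 0) (hy : y ∈ L) (hy0 : y ≠ 0) : degAt L x = degAt L y := by
  obtain ⟨a, b, hb, hab⟩ := IsFractionRing.div_surjective (A := 𝓞 K) (y / x)
  have hb0 : b ≠ 0 := nonZeroDivisors.ne_zero hb
  have ha0 : a ≠ 0 := by
    rintro rfl
    simp [eq_comm, hx0, hy0] at hab
  have hxy : a • x = b • y := by
    rw [Algebra.smul_def, Algebra.smul_def, (div_eq_div_iff (by simpa using hb0) hx0).mp hab,
      mul_comm]
  rw [← degAt_smul hL hx hx0 ha0, hxy, degAt_smul hL hy hy0 hb0]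

theorem degAt_le_degAt {L₁ L : Submodule (𝓞 K) K} (h : L₁ ≤ L) (hL : L.FG) {x : K}
    (hx0 : x ≠ 0) : degAt L₁ x ≤ degAt L x := by
  have hindex₁ := relIndex_span_singleton_ne_zero (hL.of_le h) hx0
  have hindex := relIndex_span_singleton_ne_zero hL hx0
  unfold degAt
  gcongr
  exact AddSubgroup.relIndex_le_of_le_right h hindex

theorem log_sqrt_mul_normSq {a : ℝ} (ha : 0 < a) {z : ℂ} (hz : z ≠ 0) :
    Real.log (Real.sqrt (a * Complex.normSq z)) = Real.log (Real.sqrt a) + Real.log ‖z‖ := by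
  rw [Real.sqrt_mul ha.le, ← Complex.norm_def, Real.log_mul (by positivity) (by simpa)]

theorem degLine_eq_degAt_sub {K : Type} [Field K] [NumberField K] {L : Submodule (𝓞 K) K}
    (hL : L.FG) {x : K} (hx : x ∈ L) (hx0 : x ≠ 0) {g : (K →+* ℂ) → ℝ} (hg : ∀ σ, 0 < g σ) :
    degLine K L g = degAt L x - ∑ σ : K →+* ℂ, Real.log (Real.sqrt (g σ)) := by
  have hex : ∃ y, y ∈ L ∧ y ≠ 0 := ⟨x, hx, hx0⟩
  obtain ⟨hy, hy0⟩ := hex.choose_spec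
  rw [degLine, dif_pos hex, finsum_eq_sum_of_fintype, ← degAt_eq_degAt hL hy hy0 hx hx0, degAt,
    Finset.sum_congr rfl fun σ _ => log_sqrt_mul_normSq (hg σ) (by simpa using hy0),
    Finset.sum_add_distrib]
  change Real.log ((span (𝓞 K) {_}).toAddSubgroup.relIndex L.toAddSubgroup : ℝ) - _ = _
  ring

theorem degLine_le_degLine {K : Type} [Field K] [NumberField K] {L₁ L : Submodule (𝓞 K) K}
    (h : L₁ ≤ L) (hL₁ : L₁ ≠ ⊥) (hL : L.FG) {g g₁ : (K →+* ℂ) → ℝ} (hg : ∀ σ, 0 < g σ)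
    (hgg₁ : ∀ σ, g σ ≤ g₁ σ) : degLine K L₁ g₁ ≤ degLine K L g := by
  obtain ⟨x, hx, hx0⟩ := (Submodule.ne_bot_iff _).mp hL₁
  rw [degLine_eq_degAt_sub (hL.of_le h) hx hx0 fun σ => (hg σ).trans_le (hgg₁ σ),
    degLine_eq_degAt_sub hL (h hx) hx0 hg]
  gcongr with σ
  · exact degAt_le_degAt h hL hx0
  · exact Real.sqrt_pos.mpr (hg σ)
  · exact hgg₁ σ

end RankOneLattice

section QuotientMetric

open Matrix

variable {ι κ : Type} [Fintype ι] [Fintype κ]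

theorem cForm_eq_star_dotProduct_mulVec (M : Matrix ι ι ℂ) (u v : ι → ℂ) :
    cForm M u v = star u ⬝ᵥ M *ᵥ v := by
  simp only [cForm, dotProduct, mulVec, Finset.mul_sum, Pi.star_apply, mul_assoc]
  rfl

theorem Matrix.PosSemidef.normSq_star_dotProduct_mulVec_le {M : Matrix ι ι ℂ}
    (hM : M.PosSemidef) (w e : ι → ℂ) :
    Complex.normSq (star w ⬝ᵥ M *ᵥ e) ≤ (star w ⬝ᵥ M *ᵥ w).re * (star e ⬝ᵥ M *ᵥ e).re := by
  let _ := M.toSeminormedAddCommGroup hM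
  let _ := M.toInnerProductSpace hM
  have h := norm_inner_le_norm (𝕜 := ℂ) w e
  have hw := norm_sq_eq_re_inner (𝕜 := ℂ) w
  have he := norm_sq_eq_re_inner (𝕜 := ℂ) e
  change ‖(M *ᵥ e) ⬝ᵥ star w‖ ≤ _ at h
  change _ = RCLike.re ((M *ᵥ w) ⬝ᵥ star w) at hw
  change _ = RCLike.re ((M *ᵥ e) ⬝ᵥ star e) at he
  rw [dotProduct_comm] at h hw he
  rw [Complex.normSq_eq_norm_sq, ← RCLike.re_to_complex, ← RCLike.re_to_complex, ← hw, ← he,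
    ← mul_pow]
  gcongr

theorem cForm_fromBlocks (M₁ : Matrix ι ι ℂ) (M₂ : Matrix κ κ ℂ) (u v : ι ⊕ κ → ℂ) :
    cForm (fromBlocks M₁ 0 0 M₂) u v =
      cForm M₁ (u ∘ Sum.inl) (v ∘ Sum.inl) + cForm M₂ (u ∘ Sum.inr) (v ∘ Sum.inr) := by
  simp [cForm, Fintype.sum_sum_type]

theorem Matrix.PosDef.fromBlocks_zero {M₁ : Matrix ι ι ℂ} {M₂ : Matrix κ κ ℂ} (h₁ : M₁.PosDef)
    (h₂ : M₂.PosDef) : (fromBlocks M₁ 0 0 M₂).PosDef := by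
  rw [posDef_iff_dotProduct_mulVec]
  refine ⟨by simp [IsHermitian, fromBlocks_conjTranspose, h₁.isHermitian.eq, h₂.isHermitian.eq],
    fun x hx => ?_⟩
  rw [← cForm_eq_star_dotProduct_mulVec, cForm_fromBlocks, cForm_eq_star_dotProduct_mulVec,
    cForm_eq_star_dotProduct_mulVec]
  have hx' : x ∘ Sum.inl ≠ 0 ∨ x ∘ Sum.inr ≠ 0 := by
    by_contra! h
    exact hx (funext fun i => i.rec (congrFun h.1) (congrFun h.2))
  rcases hx' with hx₁ | hx₂
  · exact add_pos_of_pos_of_nonneg (h₁.dotProduct_mulVec_pos hx₁)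
      (h₂.posSemidef.dotProduct_mulVec_nonneg _)
  · exact add_pos_of_nonneg_of_pos (h₁.posSemidef.dotProduct_mulVec_nonneg _)
      (h₂.dotProduct_mulVec_pos hx₂)

theorem re_cForm_fromBlocks_nonneg {M₁ : Matrix ι ι ℂ} {M₂ : Matrix κ κ ℂ}
    (h₁ : M₁.PosSemidef) (h₂ : M₂.PosSemidef) (e : ι ⊕ κ → ℂ) :
    0 ≤ (cForm (fromBlocks M₁ 0 0 M₂) e e).re := by
  rw [cForm_fromBlocks, Complex.add_re, cForm_eq_star_dotProduct_mulVec,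
    cForm_eq_star_dotProduct_mulVec]
  exact add_nonneg (h₁.re_dotProduct_nonneg _) (h₂.re_dotProduct_nonneg _)

noncomputable def quotNormSq (M : Matrix ι ι ℂ) (c : ι → ℂ) : ℝ :=
  sInf {t | ∃ e, c ⬝ᵥ e = 1 ∧ t = (cForm M e e).re}

theorem quotMetric_eq_quotNormSq {K : Type} [Field K] [DecidableEq ι]
    (H : (K →+* ℂ) → Matrix ι ι ℂ) (ψ : (ι → K) →ₗ[K] K) (σ : K →+* ℂ) :
    quotMetric H ψ σ = quotNormSq (H σ) fun i => σ (ψ (Pi.single i 1)) :=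
  rfl

theorem exists_dotProduct_eq_one {c : ι → ℂ} (hc : c ≠ 0) : ∃ e, c ⬝ᵥ e = 1 := by
  obtain ⟨i, hi⟩ := Function.ne_iff.mp hc
  exact ⟨Pi.single i (c i)⁻¹, by simpa using mul_inv_cancel₀ hi⟩

theorem quotNormSq_pos [DecidableEq ι] {M : Matrix ι ι ℂ} (hM : M.PosDef) {c : ι → ℂ}
    (hc : c ≠ 0) : 0 < quotNormSq M c := by
  have hdet : IsUnit M.det := (isUnit_iff_isUnit_det M).mp hM.isUnit
  -- `w` represents `e ↦ c ⬝ᵥ e` for the hermitian product of `M`, so by Cauchy–Schwarz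
  -- `1 ≤ ⟨w, w⟩ ⟨e, e⟩` on the fibre `c ⬝ᵥ e = 1`
  set w := star (c ᵥ* M⁻¹)
  have hw : ∀ e, star w ⬝ᵥ M *ᵥ e = c ⬝ᵥ e := fun e => by
    rw [star_star, dotProduct_mulVec, vecMul_vecMul, nonsing_inv_mul M hdet, vecMul_one]
  obtain ⟨e₀, he₀⟩ := exists_dotProduct_eq_one hc
  have hw0 : w ≠ 0 := by
    rintro h
    simpa [h, he₀] using hw e₀
  have hs := hM.re_dotProduct_pos hw0
  refine (inv_pos.mpr hs).trans_le (le_csInf ⟨_, e₀, he₀, rfl⟩ ?_)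
  rintro t ⟨e, he, rfl⟩
  have hcs := hM.posSemidef.normSq_star_dotProduct_mulVec_le w e
  rw [hw, he, map_one] at hcs
  rw [cForm_eq_star_dotProduct_mulVec, inv_le_iff_one_le_mul₀' hs]
  exact hcs

theorem quotNormSq_le_quotNormSq {M : Matrix ι ι ℂ} {N : Matrix κ κ ℂ} {c : ι → ℂ} {d : κ → ℂ}
    (hM : ∀ e, 0 ≤ (cForm M e e).re) (hd : d ≠ 0) (T : (κ → ℂ) → ι → ℂ)
    (hTc : ∀ e, c ⬝ᵥ T e = d ⬝ᵥ e) (hTM : ∀ e, cForm M (T e) (T e) = cForm N e e) :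
    quotNormSq M c ≤ quotNormSq N d := by
  obtain ⟨e₀, he₀⟩ := exists_dotProduct_eq_one hd
  refine csInf_le_csInf ⟨0, ?_⟩ ⟨_, e₀, he₀, rfl⟩ ?_
  · rintro t ⟨e, -, rfl⟩
    exact hM e
  · rintro t ⟨e, he, rfl⟩
    exact ⟨T e, (hTc e).trans he, by rw [hTM]⟩

theorem quotNormSq_fromBlocks_le_inl {M₁ : Matrix ι ι ℂ} {M₂ : Matrix κ κ ℂ}
    (h₁ : M₁.PosSemidef) (h₂ : M₂.PosSemidef) {c : ι ⊕ κ → ℂ} (hc : c ∘ Sum.inl ≠ 0) :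
    quotNormSq (fromBlocks M₁ 0 0 M₂) c ≤ quotNormSq M₁ (c ∘ Sum.inl) := by
  refine quotNormSq_le_quotNormSq (fun e => ?_) hc (fun e => Sum.elim e 0) (fun e => ?_)
    (fun e => ?_)
  · exact re_cForm_fromBlocks_nonneg h₁ h₂ e
  · simp [dotProduct, Fintype.sum_sum_type]
  · rw [cForm_fromBlocks]
    simp [cForm]

theorem quotNormSq_fromBlocks_le_inr {M₁ : Matrix ι ι ℂ} {M₂ : Matrix κ κ ℂ}
    (h₁ : M₁.PosSemidef) (h₂ : M₂.PosSemidef) {c : ι ⊕ κ → ℂ} (hc : c ∘ Sum.inr ≠ 0) :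
    quotNormSq (fromBlocks M₁ 0 0 M₂) c ≤ quotNormSq M₂ (c ∘ Sum.inr) := by
  refine quotNormSq_le_quotNormSq (fun e => ?_) hc (fun e => Sum.elim 0 e) (fun e => ?_)
    (fun e => ?_)
  · exact re_cForm_fromBlocks_nonneg h₁ h₂ e
  · simp [dotProduct, Fintype.sum_sum_type]
  · rw [cForm_fromBlocks]
    simp [cForm]

end QuotientMetric

section OrthogonalSum

open Submodule

variable {ι₁ ι₂ : Type*} (R M : Type*) [Semiring R] [AddCommMonoid M] [Module R M]

def extendInl : (ι₁ → M) →ₗ[R] (ι₁ ⊕ ι₂ → M) where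
  toFun v := Sum.elim v 0
  map_add' v w := by ext (i | i) <;> simp
  map_smul' c v := by ext (i | i) <;> simp

def extendInr : (ι₂ → M) →ₗ[R] (ι₁ ⊕ ι₂ → M) where
  toFun v := Sum.elim 0 v
  map_add' v w := by ext (i | i) <;> simp
  map_smul' c v := by ext (i | i) <;> simp

variable {R M}

@[simp] theorem extendInl_apply (v : ι₁ → M) :
    extendInl R M (ι₂ := ι₂) v = Sum.elim v (0 : ι₂ → M) := rfl

@[simp] theorem extendInr_apply (v : ι₂ → M) :
    extendInr R M (ι₁ := ι₁) v = Sum.elim (0 : ι₁ → M) v := rfl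

theorem extendInl_single [DecidableEq ι₁] [DecidableEq ι₂] (a : ι₁) (x : M) :
    extendInl R M (ι₂ := ι₂) (Pi.single a x) = Pi.single (Sum.inl a) x := by
  ext (i | i) <;> simp [Pi.single_apply]

theorem extendInr_single [DecidableEq ι₁] [DecidableEq ι₂] (a : ι₂) (x : M) :
    extendInr R M (ι₁ := ι₁) (Pi.single a x) = Pi.single (Sum.inr a) x := by
  ext (i | i) <;> simp [Pi.single_apply]

theorem map_inf_comap_funLeft {N : Type*} [AddCommMonoid N] [Module R N]
    (f : (ι₁ ⊕ ι₂ → M) →ₗ[R] N) (p₁ : Submodule R (ι₁ → M)) (p₂ : Submodule R (ι₂ → M)) :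
    map f (p₁.comap (LinearMap.funLeft R M Sum.inl) ⊓ p₂.comap (LinearMap.funLeft R M Sum.inr)) =
      map (f ∘ₗ extendInl R M) p₁ ⊔ map (f ∘ₗ extendInr R M) p₂ := by
  apply le_antisymm
  · have hf : f = f ∘ₗ extendInl R M ∘ₗ LinearMap.funLeft R M Sum.inl +
        f ∘ₗ extendInr R M ∘ₗ LinearMap.funLeft R M Sum.inr := by
      refine LinearMap.ext fun v => ?_
      rw [LinearMap.add_apply, LinearMap.comp_apply, LinearMap.comp_apply, LinearMap.comp_apply,
        LinearMap.comp_apply, ← map_add]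
      congr 1
      ext (i | i) <;> simp [LinearMap.funLeft]
    nth_rewrite 1 [hf]
    refine (map_add_le _ _ _).trans (sup_le_sup ?_ ?_)
    · rw [← LinearMap.comp_assoc, map_comp]
      exact map_mono ((map_mono inf_le_left).trans (map_comap_le _ _))
    · rw [← LinearMap.comp_assoc, map_comp]
      exact map_mono ((map_mono inf_le_right).trans (map_comap_le _ _))
  · refine sup_le ?_ ?_ <;> rw [map_comp] <;> refine map_mono ?_ <;> rintro _ ⟨v, hv, rfl⟩
    · exact ⟨hv, p₂.zero_mem⟩
    · exact ⟨p₁.zero_mem, hv⟩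

end OrthogonalSum

section BaseChange

variable {K K' : Type} [Field K] [NumberField K] [Field K'] [NumberField K'] [Algebra K K']
  {ι κ : Type} [Fintype ι] [Fintype κ]

theorem baseChange_le_comap {E : Submodule (𝓞 K) (ι → K)} {F : Submodule (𝓞 K) (κ → K)}
    (A : (ι → K) → κ → K) (A' : (ι → K') →ₗ[𝓞 K'] κ → K') (hA : ∀ v ∈ E, A v ∈ F)
    (hA' : ∀ v, A' (fun i => algebraMap K K' (v i)) = fun k => algebraMap K K' (A v k)) :
    baseChange K K' E ≤ (baseChange K K' F).comap A' := by
  refine Submodule.span_le.mpr ?_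
  rintro _ ⟨v, hv, rfl⟩
  rw [SetLike.mem_coe, Submodule.mem_comap, hA']
  exact Submodule.subset_span ⟨A v, hA v hv, rfl⟩

theorem baseChange_fg {E : Submodule (𝓞 K) (ι → K)} (hE : E.FG) : (baseChange K K' E).FG := by
  obtain ⟨T, rfl⟩ := hE
  let f : (ι → K) →ₗ[𝓞 K] (ι → K') :=
    LinearMap.compLeft ((Algebra.linearMap K K').restrictScalars (𝓞 K)) ι
  refine ⟨T.image f, ?_⟩
  change _ = Submodule.span (𝓞 K') (f '' Submodule.span (𝓞 K) (T : Set (ι → K)))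
  rw [← Submodule.map_coe, Submodule.map_span, Submodule.span_span_of_tower, Finset.coe_image]

theorem baseChange_inf_comap_funLeft {ι₁ ι₂ : Type} [Fintype ι₁] [Fintype ι₂]
    (E₁ : Submodule (𝓞 K) (ι₁ → K)) (E₂ : Submodule (𝓞 K) (ι₂ → K)) :
    baseChange K K' (E₁.comap (LinearMap.funLeft (𝓞 K) K Sum.inl) ⊓
        E₂.comap (LinearMap.funLeft (𝓞 K) K Sum.inr)) =
      (baseChange K K' E₁).comap (LinearMap.funLeft (𝓞 K') K' Sum.inl) ⊓
        (baseChange K K' E₂).comap (LinearMap.funLeft (𝓞 K') K' Sum.inr) := by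
  refine le_antisymm (le_inf ?_ ?_) ?_
  · exact baseChange_le_comap (· ∘ Sum.inl) _ (fun v hv => hv.1) fun v => rfl
  · exact baseChange_le_comap (· ∘ Sum.inr) _ (fun v hv => hv.2) fun v => rfl
  · rintro v ⟨hv₁, hv₂⟩
    have hv : v = extendInl (𝓞 K') K' (v ∘ Sum.inl) + extendInr (𝓞 K') K' (v ∘ Sum.inr) := by
      ext (i | i) <;> simp
    rw [hv]
    refine add_mem (baseChange_le_comap (extendInl (𝓞 K) K) _ ?_ ?_ hv₁)
      (baseChange_le_comap (extendInr (𝓞 K) K) _ ?_ ?_ hv₂)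
    · exact fun w hw => ⟨hw, E₂.zero_mem⟩
    · exact fun w => by ext (i | i) <;> simp
    · exact fun w hw => ⟨E₁.zero_mem, hw⟩
    · exact fun w => by ext (i | i) <;> simp

theorem map_baseChange_inf_comap_funLeft {ι₁ ι₂ : Type} [Fintype ι₁] [Fintype ι₂]
    (E₁ : Submodule (𝓞 K) (ι₁ → K)) (E₂ : Submodule (𝓞 K) (ι₂ → K))
    (ψ : (ι₁ ⊕ ι₂ → K') →ₗ[K'] K') :
    Submodule.map (ψ.restrictScalars (𝓞 K')) (baseChange K K'
        (E₁.comap (LinearMap.funLeft (𝓞 K) K Sum.inl) ⊓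
          E₂.comap (LinearMap.funLeft (𝓞 K) K Sum.inr))) =
      Submodule.map ((ψ ∘ₗ extendInl K' K').restrictScalars (𝓞 K')) (baseChange K K' E₁) ⊔
        Submodule.map ((ψ ∘ₗ extendInr K' K').restrictScalars (𝓞 K')) (baseChange K K' E₂) := by
  rw [baseChange_inf_comap_funLeft, map_inf_comap_funLeft]
  rfl

end BaseChange

section RankOneQuotient

variable {K : Type} [Field K] {ι₁ ι₂ : Type} [Fintype ι₁] [Fintype ι₂] [DecidableEq ι₁]
  [DecidableEq ι₂]

theorem ne_zero_of_map_restrictScalars_ne_bot {R V W : Type*} [CommRing R] [AddCommGroup V]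
    [Module K V] [Module R V] [AddCommGroup W] [Module K W] [Module R W] [Algebra R K]
    [IsScalarTower R K V] [IsScalarTower R K W] {ψ : V →ₗ[K] W} {N : Submodule R V}
    (h : Submodule.map (ψ.restrictScalars R) N ≠ ⊥) : ψ ≠ 0 := by
  rintro rfl
  simp at h

theorem comp_single_ne_zero {ι : Type} [Fintype ι] [DecidableEq ι] {ψ : (ι → K) →ₗ[K] K}
    (hψ : ψ ≠ 0) (σ : K →+* ℂ) : (fun i => σ (ψ (Pi.single i 1))) ≠ 0 := by
  contrapose! hψ
  exact (Pi.basisFun K ι).ext fun i => by simpa using congrFun hψ i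

theorem quotMetric_pos {ι : Type} [Fintype ι] [DecidableEq ι] {H : (K →+* ℂ) → Matrix ι ι ℂ}
    {σ : K →+* ℂ} (hH : (H σ).PosDef) {ψ : (ι → K) →ₗ[K] K} (hψ : ψ ≠ 0) :
    0 < quotMetric H ψ σ :=
  quotNormSq_pos hH (comp_single_ne_zero hψ σ)

theorem quotMetric_fromBlocks_le_inl (H₁ : (K →+* ℂ) → Matrix ι₁ ι₁ ℂ)
    (H₂ : (K →+* ℂ) → Matrix ι₂ ι₂ ℂ) (ψ : (ι₁ ⊕ ι₂ → K) →ₗ[K] K) {σ : K →+* ℂ}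
    (h₁ : (H₁ σ).PosSemidef) (h₂ : (H₂ σ).PosSemidef) (hψ : ψ ∘ₗ extendInl K K ≠ 0) :
    quotMetric (fun τ => Matrix.fromBlocks (H₁ τ) 0 0 (H₂ τ)) ψ σ ≤
      quotMetric H₁ (ψ ∘ₗ extendInl K K) σ := by
  have hc := comp_single_ne_zero hψ σ
  simp only [LinearMap.comp_apply, extendInl_single] at hc
  rw [quotMetric_eq_quotNormSq, quotMetric_eq_quotNormSq]
  simp only [LinearMap.comp_apply, extendInl_single]
  exact quotNormSq_fromBlocks_le_inl h₁ h₂ hc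

theorem quotMetric_fromBlocks_le_inr (H₁ : (K →+* ℂ) → Matrix ι₁ ι₁ ℂ)
    (H₂ : (K →+* ℂ) → Matrix ι₂ ι₂ ℂ) (ψ : (ι₁ ⊕ ι₂ → K) →ₗ[K] K) {σ : K →+* ℂ}
    (h₁ : (H₁ σ).PosSemidef) (h₂ : (H₂ σ).PosSemidef) (hψ : ψ ∘ₗ extendInr K K ≠ 0) :
    quotMetric (fun τ => Matrix.fromBlocks (H₁ τ) 0 0 (H₂ τ)) ψ σ ≤
      quotMetric H₂ (ψ ∘ₗ extendInr K K) σ := by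
  have hc := comp_single_ne_zero hψ σ
  simp only [LinearMap.comp_apply, extendInr_single] at hc
  rw [quotMetric_eq_quotNormSq, quotMetric_eq_quotNormSq]
  simp only [LinearMap.comp_apply, extendInr_single]
  exact quotNormSq_fromBlocks_le_inr h₁ h₂ hc

end RankOneQuotient

theorem isNef_orthogonal_sum_general (K : Type) [Field K] [NumberField K]
    {ι₁ ι₂ : Type} [Fintype ι₁] [Fintype ι₂] [DecidableEq ι₁] [DecidableEq ι₂]
    (E₁ : Submodule (𝓞 K) (ι₁ → K)) (E₂ : Submodule (𝓞 K) (ι₂ → K))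
    (hfg₁ : E₁.FG) (hfg₂ : E₂.FG)
    (H₁ : (K →+* ℂ) → Matrix ι₁ ι₁ ℂ) (H₂ : (K →+* ℂ) → Matrix ι₂ ι₂ ℂ)
    (hpos₁ : ∀ σ, (H₁ σ).PosDef) (hpos₂ : ∀ σ, (H₂ σ).PosDef)
    (hnef₁ : IsNef K H₁ E₁) (hnef₂ : IsNef K H₂ E₂) :
    IsNef K (fun σ => Matrix.fromBlocks (H₁ σ) 0 0 (H₂ σ))
      ((E₁.comap (LinearMap.funLeft (𝓞 K) K Sum.inl)) ⊓
        (E₂.comap (LinearMap.funLeft (𝓞 K) K Sum.inr))) := by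
  intro K' _ _ _ ψ hL
  have hψ := ne_zero_of_map_restrictScalars_ne_bot hL
  rw [map_baseChange_inf_comap_funLeft] at hL ⊢
  have hfg := ((baseChange_fg hfg₁).map ((ψ ∘ₗ extendInl K' K').restrictScalars (𝓞 K'))).sup
    ((baseChange_fg hfg₂).map ((ψ ∘ₗ extendInr K' K').restrictScalars (𝓞 K')))
  have hg : ∀ σ, 0 < quotMetric
      (baseChangeMetric K K' fun σ => Matrix.fromBlocks (H₁ σ) 0 0 (H₂ σ)) ψ σ := fun σ =>
    quotMetric_pos ((hpos₁ _).fromBlocks_zero (hpos₂ _)) hψ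
  rcases not_and_or.mp (mt sup_eq_bot_iff.mpr hL) with hL₁ | hL₂
  · refine (hnef₁ K' _ hL₁).trans (degLine_le_degLine le_sup_left hL₁ hfg hg fun σ => ?_)
    exact quotMetric_fromBlocks_le_inl _ _ ψ (hpos₁ _).posSemidef (hpos₂ _).posSemidef
      (ne_zero_of_map_restrictScalars_ne_bot hL₁)
  · refine (hnef₂ K' _ hL₂).trans (degLine_le_degLine le_sup_right hL₂ hfg hg fun σ => ?_)
    exact quotMetric_fromBlocks_le_inr _ _ ψ (hpos₁ _).posSemidef (hpos₂ _).posSemidef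
      (ne_zero_of_map_restrictScalars_ne_bot hL₂)

/-- Let `K` be a number field.  The orthogonal direct sum of two nef
hermitian `𝒪_K`-lattices is nef.  Here the orthogonal sum of the lattices `E₁ ⊆ K^ι₁` and
`E₂ ⊆ K^ι₂` is the lattice `E₁ ⊕ E₂ ⊆ K^(ι₁ ⊕ ι₂)`, with the block-diagonal
(orthogonal direct sum) metrics. -/
theorem isNef_orthogonal_sum (K : Type) [Field K] [NumberField K]
    {ι₁ ι₂ : Type} [Fintype ι₁] [Fintype ι₂] [DecidableEq ι₁] [DecidableEq ι₂]
    (E₁ : Submodule (𝓞 K) (ι₁ → K)) (E₂ : Submodule (𝓞 K) (ι₂ → K))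
    (hfg₁ : E₁.FG) (hfg₂ : E₂.FG)
    (hfull₁ : Submodule.span K ((E₁ : Set (ι₁ → K))) = ⊤)
    (hfull₂ : Submodule.span K ((E₂ : Set (ι₂ → K))) = ⊤)
    (H₁ : (K →+* ℂ) → Matrix ι₁ ι₁ ℂ) (H₂ : (K →+* ℂ) → Matrix ι₂ ι₂ ℂ)
    (hpos₁ : ∀ σ, (H₁ σ).PosDef) (hpos₂ : ∀ σ, (H₂ σ).PosDef)
    (hconj₁ : ConjCompatible K H₁) (hconj₂ : ConjCompatible K H₂)
    (hnef₁ : IsNef K H₁ E₁) (hnef₂ : IsNef K H₂ E₂) :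
    IsNef K (fun σ => Matrix.fromBlocks (H₁ σ) 0 0 (H₂ σ))
      ((E₁.comap (LinearMap.funLeft (𝓞 K) K Sum.inl)) ⊓
        (E₂.comap (LinearMap.funLeft (𝓞 K) K Sum.inr))) :=
  isNef_orthogonal_sum_general K E₁ E₂ hfg₁ hfg₂ H₁ H₂ hpos₁ hpos₂ hnef₁ hnef₂
end

section
/- Under the axioms below, for any nonzero objects M₁, M₂ of C one has ν(M₁ ⊗ M₂) ≤ μ_max(M₁) + μ_max(M₂). -/
open CategoryTheory CategoryTheory.Limits MonoidalCategory

noncomputable section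

universe v u

variable {C : Type u} [Category.{v} C]

/-- The coimage of a morphism in a category with kernels and cokernels:
the cokernel of its kernel. -/
def Coim [HasZeroMorphisms C] [HasKernels C] [HasCokernels C] {X Y : C} (f : X ⟶ Y) : C :=
  cokernel (kernel.ι f)

/-- The image of a morphism in a category with kernels and cokernels:
the kernel of its cokernel. -/
def Im [HasZeroMorphisms C] [HasKernels C] [HasCokernels C] {X Y : C} (f : X ⟶ Y) : C :=
  kernel (cokernel.π f)

/-- `μ_max(M) ∈ ℝ ∪ {±∞}`: the supremum of `μ(N)` over the nonzero subobjects `N` of `M`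
(taken in the extended reals; it is `> -∞` as soon as `M` is nonzero, and it may be `+∞`). -/
def muMaxE (μ : C → ℝ) (M : C) : EReal :=
  sSup { x : EReal | ∃ (N : C) (f : N ⟶ M), Mono f ∧ ¬ IsZero N ∧ x = (μ N : EReal) }

/-- An object `L` of a monoidal category is invertible if it admits a two-sided
`⊗`-inverse. -/
def IsInvertibleObj [MonoidalCategory C] (L : C) : Prop :=
  ∃ L' : C, Nonempty (L ⊗ L' ≅ 𝟙_ C) ∧ Nonempty (L' ⊗ L ≅ 𝟙_ C)

/-- `ν(M) ∈ ℝ ∪ {±∞}`: the supremum of `μ(L)` over the nonzero invertible subobjects `L`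
of `M` (it is `-∞` if there is no such subobject). -/
def nuE [MonoidalCategory C] (μ : C → ℝ) (M : C) : EReal :=
  sSup { x : EReal | ∃ (L : C) (f : L ⟶ M), Mono f ∧ ¬ IsZero L ∧ IsInvertibleObj L ∧
    x = (μ L : EReal) }

end

/-!
Let `L ↪ M₁ ⊗ M₂` be an invertible subobject with inverse `L'`. Then
`𝟙 ≅ L' ⊗ L ↪ (L' ⊗ M₁) ⊗ M₂` is nonzero, so `u` gives a nonzero morphism `M₂^∨ ⟶ L' ⊗ M₁`,
i.e. a nonzero `w : P ⟶ M₂` with `P^∨ ≅ L' ⊗ M₁`. The slope inequality for `w` yields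
`μ(L) = μ(L ⊗ (Coim w)^∨) + μ(Coim w) ≤ μ(L ⊗ (Coim w)^∨) + μ(Im w)`, where `Im w ⊆ M₂` and
`L ⊗ (Coim w)^∨ ⊆ L ⊗ P^∨ ≅ L ⊗ L' ⊗ M₁ ≅ M₁` are nonzero subobjects.

Since `μ` is not assumed to be invariant under isomorphisms, `w` is obtained through the
quasi-inverse of `(·)^∨` rather than through a double dual: every slope is then taken of an
object to which one of the hypotheses applies literally.
-/

namespace CategoryTheory

variable {C : Type u} [Category.{v} C]

section Invertible

variable [MonoidalCategory C]

def tensorLeftEquivalence {L L' : C} (α : L ⊗ L' ≅ 𝟙_ C) (β : L' ⊗ L ≅ 𝟙_ C) : C ≌ C :=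
  Equivalence.mk (tensorLeft L) (tensorLeft L')
    ((tensorLeftTensor L' L).symm ≪≫ (curriedTensor C).mapIso β ≪≫ leftUnitorNatIso C).symm
    ((tensorLeftTensor L L').symm ≪≫ (curriedTensor C).mapIso α ≪≫ leftUnitorNatIso C)

variable {L L' : C}

lemma mono_whiskerLeft_of_invertible (α : L ⊗ L' ≅ 𝟙_ C) (β : L' ⊗ L ≅ 𝟙_ C) {X Y : C}
    (f : X ⟶ Y) [Mono f] : Mono (L ◁ f) :=
  (tensorLeftEquivalence α β).functor.map_mono f

lemma whiskerLeft_ne_zero_of_invertible [HasZeroMorphisms C] (α : L ⊗ L' ≅ 𝟙_ C)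
    (β : L' ⊗ L ≅ 𝟙_ C) {X Y : C} {f : X ⟶ Y} (hf : f ≠ 0) : L ◁ f ≠ 0 :=
  fun h => hf ((tensorLeftEquivalence α β).functor.map_eq_zero_iff.mp h)

end Invertible

section ZeroMorphisms

variable [HasZeroMorphisms C]

lemma ne_zero_of_mono {X Y : C} (f : X ⟶ Y) [Mono f] (hX : ¬ IsZero X) : f ≠ 0 := by
  rintro rfl
  exact hX (IsZero.of_mono_zero X Y)

section ImageCoimage

variable [HasKernels C] [HasCokernels C] {X Y : C} {f : X ⟶ Y}

lemma not_isZero_Im (hf : f ≠ 0) : ¬ IsZero (Im f) := fun h => hf <| by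
  rw [← kernel.lift_ι (cokernel.π f) f (cokernel.condition f), h.eq_of_tgt (kernel.lift ..) 0]
  exact zero_comp

lemma not_isZero_Coim (hf : f ≠ 0) : ¬ IsZero (Coim f) := fun h => hf <| by
  rw [← cokernel.π_desc (kernel.ι f) f (kernel.condition f), h.eq_of_src (cokernel.desc ..) 0]
  exact comp_zero

end ImageCoimage

section Duality

variable (e : C ≌ Cᵒᵖ)

lemma not_isZero_unop_functor_obj {X : C} (hX : ¬ IsZero X) : ¬ IsZero (e.functor.obj X).unop :=
  fun h => hX ((e.inverse.map_isZero h.op).of_iso (e.unitIso.app X))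

lemma exists_transpose_ne_zero {M E : C} {v : (e.functor.obj M).unop ⟶ E} (hv : v ≠ 0) :
    ∃ (P : C) (w : P ⟶ M), w ≠ 0 ∧ Nonempty ((e.functor.obj P).unop ≅ E) := by
  refine ⟨e.inverse.obj (Opposite.op E), e.inverse.map v.op ≫ e.unitIso.inv.app M, fun h => hv ?_,
    ⟨(e.counitIso.app (Opposite.op E)).unop.symm⟩⟩
  rw [← Quiver.Hom.op_inj.eq_iff, op_zero, ← e.inverse.map_eq_zero_iff]
  exact zero_of_comp_mono _ h

variable [HasKernels C] [HasCokernels C] (μ : C → ℝ)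

lemma exists_dual_subobject_add_subobject_nonneg
    (hμ : ∀ {X Y : C} (f : X ⟶ Y), f ≠ 0 → μ (Coim f) ≤ μ (Im f))
    (hμdual : ∀ M : C, ¬ IsZero M → μ ((e.functor.obj M).unop) = -μ M)
    {P M : C} {w : P ⟶ M} (hw : w ≠ 0) :
    ∃ (D N : C) (d : D ⟶ (e.functor.obj P).unop) (n : N ⟶ M), Mono d ∧ Mono n ∧
      ¬ IsZero D ∧ ¬ IsZero N ∧ 0 ≤ μ D + μ N := by
  have hR := not_isZero_Coim hw
  refine ⟨(e.functor.obj (Coim w)).unop, Im w,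
    (e.functor.map (cokernel.π (kernel.ι w) : P ⟶ Coim w)).unop, kernel.ι (cokernel.π w),
    unop_mono_of_epi _, equalizer.ι_mono, not_isZero_unop_functor_obj e hR, not_isZero_Im hw, ?_⟩
  have := hμ w hw
  rw [hμdual _ hR]
  linarith

end Duality

end ZeroMorphisms

lemma coe_le_muMaxE (μ : C → ℝ) {N M : C} (f : N ⟶ M) [Mono f] (hN : ¬ IsZero N) :
    (μ N : EReal) ≤ muMaxE μ M :=
  le_sSup ⟨N, f, inferInstance, hN, rfl⟩

end CategoryTheory

open CategoryTheory CategoryTheory.Limits MonoidalCategory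

theorem nu_tensor_le_general {C : Type u} [Category.{v} C] [HasZeroMorphisms C] [HasZeroObject C]
    [HasKernels C] [HasCokernels C] [MonoidalCategory C]
    (μ : C → ℝ)
    (hμ : ∀ {X Y : C} (f : X ⟶ Y), f ≠ 0 → μ (Coim f) ≤ μ (Im f))
    (hμtens : ∀ M₁ M₂ : C, ¬ IsZero M₁ → ¬ IsZero M₂ →
      ¬ IsZero (M₁ ⊗ M₂) ∧ μ (M₁ ⊗ M₂) = μ M₁ + μ M₂)
    (e : C ≌ Cᵒᵖ)
    (hμdual : ∀ M : C, ¬ IsZero M → μ ((e.functor.obj M).unop) = -μ M)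
    (u : ∀ M₁ M₂ : C, (𝟙_ C ⟶ M₁ ⊗ M₂) → ((e.functor.obj M₂).unop ⟶ M₁))
    (hu : ∀ (M₁ M₂ : C) (f : 𝟙_ C ⟶ M₁ ⊗ M₂), f ≠ 0 → u M₁ M₂ f ≠ 0)
    (M₁ M₂ : C) :
    nuE μ (M₁ ⊗ M₂) ≤ muMaxE μ M₁ + muMaxE μ M₂ := by
  refine sSup_le ?_
  rintro _ ⟨L, f, hf, hL, ⟨L', ⟨α⟩, ⟨β⟩⟩, rfl⟩
  have hsection : β.inv ≫ L' ◁ f ≫ (α_ L' M₁ M₂).inv ≠ 0 := fun h =>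
    whiskerLeft_ne_zero_of_invertible β α (ne_zero_of_mono f hL)
      (zero_of_comp_mono _ (zero_of_epi_comp _ h))
  obtain ⟨P, w, hw, ⟨ε⟩⟩ := exists_transpose_ne_zero e (hu _ _ _ hsection)
  obtain ⟨D, N, d, n, hd, hn, hD, hN, hDN⟩ :=
    exists_dual_subobject_add_subobject_nonneg e μ hμ hμdual hw
  obtain ⟨hLD, hμLD⟩ := hμtens L D hL hD
  let ι : L ⊗ (L' ⊗ M₁) ≅ M₁ := (tensorLeftEquivalence α β).counitIso.app M₁
  have : Mono (L ◁ (d ≫ ε.hom)) := mono_whiskerLeft_of_invertible α β _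
  have h₁ := coe_le_muMaxE μ (L ◁ (d ≫ ε.hom) ≫ ι.hom) hLD
  have h₂ := coe_le_muMaxE μ n hN
  calc (μ L : EReal) ≤ (μ (L ⊗ D) + μ N : ℝ) := EReal.coe_le_coe_iff.mpr (by linarith)
    _ ≤ muMaxE μ M₁ + muMaxE μ M₂ := by rw [EReal.coe_add]; exact add_le_add h₁ h₂

/-- Let `C` be an (essentially small) monoidal category with a zero object,
kernels and cokernels, `μ` a real-valued function on its nonzero objects with
`μ(Coim f) ≤ μ(Im f)` for every nonzero morphism `f` and
`μ(M₁ ⊗ M₂) = μ(M₁) + μ(M₂)`, equipped with an anti-equivalence `(-)^∨ : C → C^op` with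
`μ(M^∨) = -μ(M)` and a family of maps `u : C(𝟙, M₁ ⊗ M₂) → C(M₂^∨, M₁)` sending nonzero
morphisms to nonzero morphisms.  Then for any nonzero objects `M₁`, `M₂`:
`ν(M₁ ⊗ M₂) ≤ μ_max(M₁) + μ_max(M₂)`. -/
theorem nu_tensor_le {C : Type u} [Category.{v} C] [HasZeroMorphisms C] [HasZeroObject C]
    [HasKernels C] [HasCokernels C] [MonoidalCategory C]
    (μ : C → ℝ)
    (hμ : ∀ {X Y : C} (f : X ⟶ Y), f ≠ 0 → μ (Coim f) ≤ μ (Im f))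
    (hμtens : ∀ M₁ M₂ : C, ¬ IsZero M₁ → ¬ IsZero M₂ →
      ¬ IsZero (M₁ ⊗ M₂) ∧ μ (M₁ ⊗ M₂) = μ M₁ + μ M₂)
    (e : C ≌ Cᵒᵖ)
    (hμdual : ∀ M : C, ¬ IsZero M → μ ((e.functor.obj M).unop) = -μ M)
    (u : ∀ M₁ M₂ : C, (𝟙_ C ⟶ M₁ ⊗ M₂) → ((e.functor.obj M₂).unop ⟶ M₁))
    (hu : ∀ (M₁ M₂ : C) (f : 𝟙_ C ⟶ M₁ ⊗ M₂), f ≠ 0 → u M₁ M₂ f ≠ 0)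
    (M₁ M₂ : C) (h₁ : ¬ IsZero M₁) (h₂ : ¬ IsZero M₂) :
    nuE μ (M₁ ⊗ M₂) ≤ muMaxE μ M₁ + muMaxE μ M₂ :=
  nu_tensor_le_general μ hμ hμtens e hμdual u hu M₁ M₂
end

section
/- Under the axioms below, and assuming in addition that the tensor product of two monomorphisms of C is a monomorphism, for any nonzero objects M₁, M₂ of C one has μ_max(M₁) + μ_max(M₂) ≤ μ_max(M₁ ⊗ M₂). -/
open CategoryTheory CategoryTheory.Limits MonoidalCategory

open CategoryTheory CategoryTheory.Limits MonoidalCategory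

/-! If `N₁ ↪ M₁` and `N₂ ↪ M₂` are nonzero subobjects, then `N₁ ⊗ N₂ ↪ M₁ ⊗ M₂` is a nonzero
subobject of slope `μ N₁ + μ N₂`; taking suprema over `N₁` and `N₂` gives the inequality. -/

section muMaxE

variable {C : Type u} [Category.{v} C] {μ : C → ℝ} {M : C}

theorem coe_le_muMaxE {N : C} (f : N ⟶ M) (hf : Mono f) (hN : ¬ IsZero N) :
    (μ N : EReal) ≤ muMaxE μ M :=
  le_sSup ⟨N, f, hf, hN, rfl⟩

theorem exists_lt_of_lt_muMaxE {x : EReal} (hx : x < muMaxE μ M) :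
    ∃ (N : C) (f : N ⟶ M), Mono f ∧ ¬ IsZero N ∧ x < μ N := by
  obtain ⟨_, ⟨N, f, hf, hN, rfl⟩, hxN⟩ := exists_lt_of_lt_csSup' hx
  exact ⟨N, f, hf, hN, hxN⟩

end muMaxE

theorem muMax_add_le_muMax_tensor_general {C : Type u} [Category.{v} C] [MonoidalCategory C]
    (μ : C → ℝ)
    (hμtens : ∀ M₁ M₂ : C, ¬ IsZero M₁ → ¬ IsZero M₂ →
      ¬ IsZero (M₁ ⊗ M₂) ∧ μ (M₁ ⊗ M₂) = μ M₁ + μ M₂)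
    (hmono : ∀ {X Y X' Y' : C} (f : X ⟶ Y) (g : X' ⟶ Y'),
      Mono f → Mono g → Mono (f ⊗ₘ g))
    (M₁ M₂ : C) :
    muMaxE μ M₁ + muMaxE μ M₂ ≤ muMaxE μ (M₁ ⊗ M₂) := by
  refine EReal.add_le_of_forall_lt fun x hx y hy => ?_
  obtain ⟨N₁, f₁, hf₁, hN₁, hxN₁⟩ := exists_lt_of_lt_muMaxE hx
  obtain ⟨N₂, f₂, hf₂, hN₂, hyN₂⟩ := exists_lt_of_lt_muMaxE hy
  obtain ⟨hN, hμN⟩ := hμtens N₁ N₂ hN₁ hN₂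
  calc x + y ≤ (μ N₁ : EReal) + μ N₂ := add_le_add hxN₁.le hyN₂.le
    _ = μ (N₁ ⊗ N₂) := by rw [hμN, EReal.coe_add]
    _ ≤ muMaxE μ (M₁ ⊗ M₂) := coe_le_muMaxE (f₁ ⊗ₘ f₂) (hmono f₁ f₂ hf₁ hf₂) hN

/-- Let `C` be an (essentially small) monoidal category with a zero object,
kernels and cokernels, and `μ` a real-valued function on its nonzero objects with
`μ(Coim f) ≤ μ(Im f)` for every nonzero morphism `f` and `μ(M₁ ⊗ M₂) = μ(M₁) + μ(M₂)`.
Assume in addition that the tensor product of two monomorphisms is a monomorphism.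
Then for any nonzero objects `M₁`, `M₂`:
`μ_max(M₁) + μ_max(M₂) ≤ μ_max(M₁ ⊗ M₂)`. -/
theorem muMax_add_le_muMax_tensor {C : Type u} [Category.{v} C] [HasZeroMorphisms C]
    [HasZeroObject C] [HasKernels C] [HasCokernels C] [MonoidalCategory C]
    (μ : C → ℝ)
    (hμ : ∀ {X Y : C} (f : X ⟶ Y), f ≠ 0 → μ (Coim f) ≤ μ (Im f))
    (hμtens : ∀ M₁ M₂ : C, ¬ IsZero M₁ → ¬ IsZero M₂ →
      ¬ IsZero (M₁ ⊗ M₂) ∧ μ (M₁ ⊗ M₂) = μ M₁ + μ M₂)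
    (hmono : ∀ {X Y X' Y' : C} (f : X ⟶ Y) (g : X' ⟶ Y'),
      Mono f → Mono g → Mono (f ⊗ₘ g))
    (M₁ M₂ : C) (h₁ : ¬ IsZero M₁) (h₂ : ¬ IsZero M₂) :
    muMaxE μ M₁ + muMaxE μ M₂ ≤ muMaxE μ (M₁ ⊗ M₂) :=
  muMax_add_le_muMax_tensor_general μ hμtens hmono M₁ M₂
end
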